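/- arXiv:1107.2355 — 2 statements merged into one kernel-verified Lean document; each statement's English description precedes it below -/
import Mathlib

section
/- Let g ≥ 1, let h : ℤ → ℤ satisfy h(d) = 0 for d < 0, h(d) = d+1-g for d > 2g-2, and h(d)-h(d-1) ∈ {0,1}. In the polynomial ring ℤ[q, L], define Z_h(q) = Σ_{d ∈ φ₋(h)} q^d L^{h(d)-1} − Σ_{d ∈ φ₊(h)} q^d L^{h(d-1)}, where φ₋(h) = {d | 2h(d-1)-h(d-2)-h(d) = -1} and φ₊(h) = {d | 2h(d-1)-h(d-2)-h(d) = 1}. Then Z_h(q) is a polynomial in q of degree at most 2g, and (1-q)(1-qL) Σ_{d≥0} q^d [h(d)] = Z_h(q) as formal power series in q over ℤ[L], where [n] denotes 1 + L + ⋯ + L^{n-1}. -/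
open scoped BigOperators

/-- The coefficient of `q^d` in `Z_h(q) ∈ ℤ[L][q]`:
`Z_h(q) = Σ_{d ∈ φ₋(h)} q^d L^{h(d)-1} − Σ_{d ∈ φ₊(h)} q^d L^{h(d-1)}`. -/
noncomputable def Zcoef (h : ℤ → ℤ) (d : ℤ) : Polynomial ℤ :=
  (if 2 * h (d - 1) - h (d - 2) - h d = -1 then Polynomial.X ^ (h d - 1).toNat else 0) -
  (if 2 * h (d - 1) - h (d - 2) - h d = 1 then Polynomial.X ^ (h (d - 1)).toNat else 0)

noncomputable def Spoly (h : ℤ → ℤ) (d : ℤ) : Polynomial ℤ :=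
  ∑ i ∈ Finset.range (h d).toNat, Polynomial.X ^ i

section Aux
variable (h : ℤ → ℤ)

lemma hnonneg_aux (hneg : ∀ d : ℤ, d < 0 → h d = 0)
    (hstep : ∀ d : ℤ, h d - h (d - 1) = 0 ∨ h d - h (d - 1) = 1) :
    ∀ d : ℤ, 0 ≤ h d := by
  have key : ∀ n : ℕ, 0 ≤ h n := by
    intro n
    induction n with
    | zero =>
      have := hstep 0
      have h1 : h (0 - 1) = 0 := hneg _ (by norm_num)
      rw [h1] at this
      push_cast
      omega
    | succ n ih =>
      have := hstep (n + 1)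
      have e : ((n : ℤ) + 1) - 1 = n := by ring
      rw [e] at this
      push_cast
      omega
  intro d
  rcases lt_or_ge d 0 with hd | hd
  · rw [hneg d hd]
  · have : d = ((d.toNat : ℤ)) := (Int.toNat_of_nonneg hd).symm
    rw [this]; exact key _

lemma diff_aux (hneg : ∀ d : ℤ, d < 0 → h d = 0)
    (hstep : ∀ d : ℤ, h d - h (d - 1) = 0 ∨ h d - h (d - 1) = 1) (d : ℤ) :
    Spoly h d - Spoly h (d - 1) =
      if h d - h (d - 1) = 1 then Polynomial.X ^ (h d - 1).toNat else 0 := by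
  have hnn := hnonneg_aux h hneg hstep
  unfold Spoly
  rcases hstep d with h0 | h1
  · have : h d = h (d - 1) := by omega
    rw [this, if_neg (by omega), sub_self]
  · have he : h d = h (d - 1) + 1 := by omega
    have ht : (h d).toNat = (h (d - 1)).toNat + 1 := by
      have := hnn (d - 1); omega
    have ht2 : (h d - 1).toNat = (h (d - 1)).toNat := by
      have := hnn (d - 1); omega
    rw [if_pos h1, ht, Finset.sum_range_succ, ht2]
    ring

lemma coef_aux (hneg : ∀ d : ℤ, d < 0 → h d = 0)
    (hstep : ∀ d : ℤ, h d - h (d - 1) = 0 ∨ h d - h (d - 1) = 1) (d : ℤ) :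
    (if h d - h (d - 1) = 1 then (Polynomial.X : Polynomial ℤ) ^ (h d - 1).toNat else 0) -
      Polynomial.X *
        (if h (d - 1) - h (d - 2) = 1 then (Polynomial.X : Polynomial ℤ) ^ (h (d - 1) - 1).toNat else 0) =
      Zcoef h d := by
  have hnn := hnonneg_aux h hneg hstep
  have hs1 := hstep d
  have hs2 : h (d - 1) - h (d - 2) = 0 ∨ h (d - 1) - h (d - 2) = 1 := by
    have := hstep (d - 1); rwa [show d - 1 - 1 = d - 2 by ring] at this
  unfold Zcoef
  rcases hs1 with h1 | h1 <;> rcases hs2 with h2 | h2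
  · rw [if_neg (by omega), if_neg (by omega), if_neg (by omega), if_neg (by omega)]
    ring
  · rw [if_neg (by omega), if_pos h2, if_neg (by omega), if_pos (by omega)]
    have hx : Polynomial.X * (Polynomial.X : Polynomial ℤ) ^ (h (d - 1) - 1).toNat =
        Polynomial.X ^ (h (d - 1)).toNat := by
      rw [← pow_succ']
      congr 1
      have := hnn (d - 2); omega
    rw [hx]
  · rw [if_pos h1, if_neg (by omega), if_pos (by omega), if_neg (by omega)]
    ring
  · rw [if_pos h1, if_pos h2, if_neg (by omega), if_neg (by omega)]
    have hx : Polynomial.X * (Polynomial.X : Polynomial ℤ) ^ (h (d - 1) - 1).toNat =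
        Polynomial.X ^ (h (d - 1)).toNat := by
      rw [← pow_succ']
      congr 1
      have := hnn (d - 2); omega
    have he : (h d - 1).toNat = (h (d - 1)).toNat := by
      have := hnn (d - 1); omega
    rw [hx, he]; ring

lemma coeff_lhs (hneg : ∀ d : ℤ, d < 0 → h d = 0) (n : ℕ) :
    PowerSeries.coeff n
      ((1 - PowerSeries.X) *
          (1 - PowerSeries.C (Polynomial.X : Polynomial ℤ) * PowerSeries.X) *
          PowerSeries.mk (fun d : ℕ =>
            ∑ i ∈ Finset.range (h (d : ℤ)).toNat, (Polynomial.X : Polynomial ℤ) ^ i)) =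
    Spoly h n - Spoly h (n - 1) -
      Polynomial.X * (Spoly h (n - 1) - Spoly h (n - 2)) := by
  have Sneg : ∀ d : ℤ, d < 0 → Spoly h d = 0 := by
    intro d hd
    simp [Spoly, hneg d hd]
  have hmk : PowerSeries.mk (fun d : ℕ =>
      ∑ i ∈ Finset.range (h (d : ℤ)).toNat, (Polynomial.X : Polynomial ℤ) ^ i) =
      PowerSeries.mk (fun d : ℕ => Spoly h d) := rfl
  rw [hmk]
  set F := PowerSeries.mk (fun d : ℕ => Spoly h d) with hF
  have expand : (1 - PowerSeries.X) *
      (1 - PowerSeries.C (Polynomial.X : Polynomial ℤ) * PowerSeries.X) * F =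
      F - PowerSeries.X ^ 1 * F -
        PowerSeries.C (Polynomial.X : Polynomial ℤ) * (PowerSeries.X ^ 1 * F) +
        PowerSeries.C (Polynomial.X : Polynomial ℤ) * (PowerSeries.X ^ 2 * F) := by
    ring
  rw [expand]
  simp only [map_sub, map_add, PowerSeries.coeff_C_mul, PowerSeries.coeff_X_pow_mul',
    hF, PowerSeries.coeff_mk]
  match n with
  | 0 =>
    have s1 : Spoly h (((0:ℕ):ℤ) - 1) = 0 := Sneg _ (by norm_num)
    have s2 : Spoly h (((0:ℕ):ℤ) - 2) = 0 := Sneg _ (by norm_num)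
    rw [s1, s2, if_neg (by norm_num), if_neg (by norm_num)]
    ring
  | 1 =>
    have s1 : Spoly h (((1:ℕ):ℤ) - 2) = 0 := Sneg _ (by norm_num)
    have e : ((1 - 1 : ℕ) : ℤ) = ((1:ℕ):ℤ) - 1 := by norm_num
    rw [s1, if_pos (le_refl 1), if_neg (by norm_num), e]
    ring
  | (n + 2) =>
    have c1 : (1:ℕ) ≤ n + 2 := by omega
    have c2 : (2:ℕ) ≤ n + 2 := by omega
    rw [if_pos c1, if_pos c2]
    have e1 : ((n + 2 - 1 : ℕ) : ℤ) = ((n + 2 : ℕ) : ℤ) - 1 := by push_cast; ring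
    have e2 : ((n + 2 - 2 : ℕ) : ℤ) = ((n + 2 : ℕ) : ℤ) - 2 := by push_cast; ring
    rw [e1, e2]
    ring

end Aux

/-- For a Hilbert function `h` of genus `g ≥ 1`, the series
`Z_h(q) = Σ_{d ∈ φ₋} q^d L^{h(d)-1} − Σ_{d ∈ φ₊} q^d L^{h(d-1)}` is a polynomial in
`q` of degree at most `2g`, and
`(1-q)(1-qL) · Σ_{d ≥ 0} q^d [h(d)] = Z_h(q)` in `ℤ[L][[q]]`,
where `[n] = 1 + L + ⋯ + L^{n-1}`. -/
theorem stratum_zeta_identity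
    (g : ℤ) (hg : 1 ≤ g) (h : ℤ → ℤ)
    (hneg : ∀ d : ℤ, d < 0 → h d = 0)
    (hbig : ∀ d : ℤ, d > 2 * g - 2 → h d = d + 1 - g)
    (hstep : ∀ d : ℤ, h d - h (d - 1) = 0 ∨ h d - h (d - 1) = 1) :
    (∀ d : ℤ, d > 2 * g → Zcoef h d = 0) ∧
    (1 - PowerSeries.X) *
        (1 - PowerSeries.C (Polynomial.X : Polynomial ℤ) * PowerSeries.X) *
        PowerSeries.mk (fun d : ℕ =>
          ∑ i ∈ Finset.range (h (d : ℤ)).toNat, (Polynomial.X : Polynomial ℤ) ^ i) =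
      PowerSeries.mk (fun d : ℕ => Zcoef h (d : ℤ)) := by
  constructor
  · intro d hd
    have h1 := hbig d (by omega)
    have h2 := hbig (d - 1) (by omega)
    have h3 := hbig (d - 2) (by omega)
    unfold Zcoef
    rw [if_neg (by omega), if_neg (by omega), sub_zero]
  · refine PowerSeries.ext fun n => ?_
    rw [coeff_lhs h hneg n, PowerSeries.coeff_mk]
    have e1 := diff_aux h hneg hstep (n : ℤ)
    have e2 := diff_aux h hneg hstep ((n : ℤ) - 1)
    rw [show ((n : ℤ) - 1 - 1) = (n : ℤ) - 2 by ring] at e2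
    rw [e1, e2]
    exact coef_aux h hneg hstep (n : ℤ)
end

section
/- With notation as above (g ≥ 1, h with the three standard properties, h∨(d) = h(2g-2-d)+d+1-g, and Z_h(q) ∈ ℤ[L][q] defined by Z_h(q) = Σ_{d∈φ₋(h)} q^d L^{h(d)-1} − Σ_{d∈φ₊(h)} q^d L^{h(d-1)}), one has the functional equation q^{2g} L^g Z_h(1/(qL)) = Z_{h∨}(q) in ℤ[L, L^{-1}][q, q^{-1}]. -/
/-- The coefficient of `q^d L^e` in the Laurent polynomial
`Z_h(q) = Σ_{d ∈ φ₋(h)} q^d L^{h(d)-1} − Σ_{d ∈ φ₊(h)} q^d L^{h(d-1)}`. -/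
def ZLaurentCoef (h : ℤ → ℤ) (d e : ℤ) : ℤ :=
  (if 2 * h (d - 1) - h (d - 2) - h d = -1 ∧ e = h d - 1 then 1 else 0) -
  (if 2 * h (d - 1) - h (d - 2) - h d = 1 ∧ e = h (d - 1) then 1 else 0)

/-- For a Hilbert function `h` of genus `g ≥ 1` and its Serre dual
`h∨(d) = h(2g-2-d) + d + 1 - g`, the functional equation
`q^{2g} L^g Z_h(1/(qL)) = Z_{h∨}(q)` holds in `ℤ[L,L⁻¹][q,q⁻¹]`; stated
coefficientwise: the coefficient of `q^d L^e` in `Z_{h∨}` equals the coefficient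
of `q^{2g-d} L^{e+g-d}` in `Z_h` (since `q^a L^b ↦ q^{2g-a} L^{g+b-a}` under
`q ↦ 1/(qL)` followed by multiplication by `q^{2g} L^g`). -/
theorem stratum_zeta_functional_equation
    (g : ℤ) (hg : 1 ≤ g) (h : ℤ → ℤ)
    (hneg : ∀ d : ℤ, d < 0 → h d = 0)
    (hbig : ∀ d : ℤ, d > 2 * g - 2 → h d = d + 1 - g)
    (hstep : ∀ d : ℤ, h d - h (d - 1) = 0 ∨ h d - h (d - 1) = 1)
    (hdual : ℤ → ℤ)
    (hdualdef : ∀ d : ℤ, hdual d = h (2 * g - 2 - d) + d + 1 - g) :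
    ∀ d e : ℤ, ZLaurentCoef hdual d e = ZLaurentCoef h (2 * g - d) (e + g - d) := by
  intro d e
  have k1 := hstep (2 * g - d)
  have k2 := hstep (2 * g - d - 1)
  have e0 : 2 * g - d - 1 - 1 = 2 * g - d - 2 := by ring
  have e1 : 2 * g - 2 - d = 2 * g - d - 2 := by ring
  have e2 : 2 * g - 2 - (d - 1) = 2 * g - d - 1 := by ring
  have e3 : 2 * g - 2 - (d - 2) = 2 * g - d := by ring
  rw [e0] at k2
  unfold ZLaurentCoef
  rw [hdualdef, hdualdef, hdualdef, e1, e2, e3]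
  generalize h (2 * g - d) = a at *
  generalize h (2 * g - d - 1) = b at *
  generalize h (2 * g - d - 2) = c at *
  split_ifs <;> omega
end
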